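/- Let μ be a finite real Borel measure on ℝ with all finite moments such that its Cauchy integral satisfies Kμ(iy) = o(y^{-n}) as y → +∞ for every n > 0. Then μ annihilates all polynomials: ∫ t^n dμ(t) = 0 for all n ≥ 0. (Key step: the entire function H(z) = ∫ (t^n − z^n)/(t − z) dμ(t) is of exponential type zero, bounded on the imaginary axis, and tends to zero along it, hence H ≡ 0.) -/

import Mathlib

open MeasureTheory Filter Asymptotics Topology

/-!
Write `mₙ = ∫ tⁿ f dμ` and `Kₙ(z) = ∫ tⁿ f(t) / (t - z) dμ`. The identity
`t / (t - z) = 1 + z / (t - z)` gives `Kₙ₊₁(z) = mₙ + z Kₙ(z)`. By strong induction, if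
`m₀ = ⋯ = mₙ₋₁ = 0` then `Kₙ(z) = zⁿ K₀(z)`, so `mₙ = Kₙ₊₁(iy) - (iy)ⁿ⁺¹ K₀(iy)`. The first term
is `O(1/y)` because `|t - iy| ≥ y`, and the second tends to `0` by the decay hypothesis; hence
`mₙ = 0`.
-/

/-- The Cauchy integral of `h dμ`, without the paper's normalising factor `1/π`. -/
noncomputable def cauchyIntegral (μ : Measure ℝ) (h : ℝ → ℂ) (z : ℂ) : ℂ :=
  ∫ t, ((t : ℂ) - z)⁻¹ * h t ∂μ

section

open Complex

variable {μ : Measure ℝ} {h : ℝ → ℂ}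

lemma ofReal_sub_ne_zero_of_im_ne_zero (t : ℝ) {z : ℂ} (hz : z.im ≠ 0) : (t : ℂ) - z ≠ 0 :=
  fun h0 => hz (by simpa using congrArg Complex.im h0)

lemma norm_inv_ofReal_sub_le (t : ℝ) {z : ℂ} (hz : z.im ≠ 0) : ‖((t : ℂ) - z)⁻¹‖ ≤ |z.im|⁻¹ := by
  rw [norm_inv]
  refine inv_anti₀ (abs_pos.2 hz) ?_
  simpa using abs_im_le_norm ((t : ℂ) - z)

lemma integrable_inv_ofReal_sub_mul (hh : Integrable h μ) {z : ℂ} (hz : z.im ≠ 0) :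
    Integrable (fun t : ℝ => ((t : ℂ) - z)⁻¹ * h t) μ :=
  hh.bdd_mul (by fun_prop) (ae_of_all _ fun t => norm_inv_ofReal_sub_le t hz)

lemma cauchyIntegral_ofReal_mul (hh : Integrable h μ) {z : ℂ} (hz : z.im ≠ 0) :
    cauchyIntegral μ (fun t => t * h t) z = ∫ t, h t ∂μ + z * cauchyIntegral μ h z := by
  have hpt : ∀ t : ℝ, ((t : ℂ) - z)⁻¹ * (t * h t) = h t + z * (((t : ℂ) - z)⁻¹ * h t) := by
    intro t
    field_simp [ofReal_sub_ne_zero_of_im_ne_zero t hz]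
    ring
  rw [cauchyIntegral, cauchyIntegral, integral_congr_ae (ae_of_all _ hpt),
    integral_add hh ((integrable_inv_ofReal_sub_mul hh hz).const_mul z), integral_const_mul]

lemma cauchyIntegral_pow_succ_mul (hmom : ∀ k, Integrable (fun t : ℝ => (t : ℂ) ^ k * h t) μ)
    {z : ℂ} (hz : z.im ≠ 0) (n : ℕ) :
    cauchyIntegral μ (fun t => (t : ℂ) ^ (n + 1) * h t) z =
      ∫ t, (t : ℂ) ^ n * h t ∂μ + z * cauchyIntegral μ (fun t => (t : ℂ) ^ n * h t) z := by
  simpa only [← mul_assoc, ← pow_succ'] using cauchyIntegral_ofReal_mul (hmom n) hz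

lemma cauchyIntegral_pow_mul_of_moment_eq_zero
    (hmom : ∀ k, Integrable (fun t : ℝ => (t : ℂ) ^ k * h t) μ) {z : ℂ} (hz : z.im ≠ 0) {n : ℕ}
    (hzero : ∀ k < n, ∫ t, (t : ℂ) ^ k * h t ∂μ = 0) :
    cauchyIntegral μ (fun t => (t : ℂ) ^ n * h t) z = z ^ n * cauchyIntegral μ h z := by
  induction n with
  | zero => simp
  | succ n ih =>
    rw [cauchyIntegral_pow_succ_mul hmom hz, hzero n n.lt_succ_self,
      ih fun k hk => hzero k (hk.trans n.lt_succ_self)]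
    ring

lemma tendsto_cauchyIntegral_I_mul_atTop (hh : Integrable h μ) :
    Tendsto (fun y : ℝ => cauchyIntegral μ h (I * y)) atTop (𝓝 0) := by
  have hlim : Tendsto (fun y : ℝ => y⁻¹ * ∫ t, ‖h t‖ ∂μ) atTop (𝓝 0) := by
    simpa using tendsto_inv_atTop_zero.mul_const (∫ t, ‖h t‖ ∂μ)
  refine squeeze_zero_norm' ?_ hlim
  filter_upwards [eventually_gt_atTop 0] with y hy
  have him : (I * y).im ≠ 0 := by simpa using hy.ne'
  rw [← integral_const_mul]
  refine norm_integral_le_of_norm_le (hh.norm.const_mul _) (ae_of_all _ fun t => ?_)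
  rw [norm_mul]
  gcongr
  simpa [abs_of_pos hy] using norm_inv_ofReal_sub_le t him

lemma moment_eq_zero_of_tendsto_I_mul_pow_mul_cauchyIntegral
    (hmom : ∀ k, Integrable (fun t : ℝ => (t : ℂ) ^ k * h t) μ)
    (hdecay : ∀ n, Tendsto (fun y : ℝ => (I * y) ^ (n + 1) * cauchyIntegral μ h (I * y))
      atTop (𝓝 0))
    (n : ℕ) : ∫ t, (t : ℂ) ^ n * h t ∂μ = 0 := by
  induction n using Nat.strong_induction_on with
  | _ n ih =>
    have hlim := (tendsto_cauchyIntegral_I_mul_atTop (hmom (n + 1))).sub (hdecay n)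
    rw [sub_zero] at hlim
    refine tendsto_const_nhds_iff.1 (hlim.congr' ?_)
    filter_upwards [eventually_gt_atTop 0] with y hy
    have him : (I * y).im ≠ 0 := by simpa using hy.ne'
    rw [cauchyIntegral_pow_succ_mul hmom him, cauchyIntegral_pow_mul_of_moment_eq_zero hmom him ih]
    ring

lemma tendsto_I_mul_pow_mul_of_isLittleO {F : ℝ → ℂ} {n : ℕ}
    (hF : F =o[atTop] fun y : ℝ => y ^ (-(n : ℝ))) :
    Tendsto (fun y : ℝ => (I * y) ^ n * F y) atTop (𝓝 0) := by
  have hpow : (fun y : ℝ => (I * y) ^ n) =O[atTop] fun y : ℝ => y ^ n :=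
    IsBigO.of_bound 1 (Eventually.of_forall fun y => by simp)
  have hone : (fun y : ℝ => y ^ n * y ^ (-(n : ℝ))) =ᶠ[atTop] fun _ => (1 : ℝ) := by
    filter_upwards [eventually_gt_atTop 0] with y hy
    rw [Real.rpow_neg hy.le, Real.rpow_natCast, mul_inv_cancel₀ (pow_pos hy n).ne']
  exact (isLittleO_one_iff ℝ).1 ((hpow.mul_isLittleO hF).congr' EventuallyEq.rfl hone)

end

theorem annihilates_of_cauchy_transform_superpolynomial_decay_general
    (μ : Measure ℝ) (f : ℝ → ℝ)
    (hf : AEStronglyMeasurable f μ)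
    (hmom : ∀ n : ℕ, Integrable (fun t => |t| ^ n * |f t|) μ)
    (hdecay : ∀ n : ℕ, 0 < n →
      (fun y : ℝ => (1 / (Real.pi : ℂ)) * ∫ t, ((t : ℂ) - Complex.I * y)⁻¹ * (f t : ℂ) ∂μ)
        =o[atTop] fun y : ℝ => y ^ (-(n : ℝ))) :
    ∀ n : ℕ, ∫ t, t ^ n * f t ∂μ = 0 := by
  have hmomC : ∀ k, Integrable (fun t : ℝ => (t : ℂ) ^ k * (f t : ℂ)) μ := fun k =>
    (hmom k).mono' (by fun_prop) (ae_of_all _ fun t => by simp)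
  have hdecayC (n : ℕ) : Tendsto (fun y : ℝ => (Complex.I * y) ^ (n + 1) *
      cauchyIntegral μ (fun t => f t) (Complex.I * y)) atTop (𝓝 0) := by
    have hπ : 1 / (Real.pi : ℂ) ≠ 0 := by simp [Real.pi_ne_zero]
    exact tendsto_I_mul_pow_mul_of_isLittleO
      ((isLittleO_const_mul_left_iff hπ).1 (hdecay (n + 1) n.succ_pos))
  intro n
  have hC := moment_eq_zero_of_tendsto_I_mul_pow_mul_cauchyIntegral hmomC hdecayC n
  have hR : ((∫ t, t ^ n * f t ∂μ : ℝ) : ℂ) = 0 := by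
    rw [← integral_complex_ofReal]
    push_cast
    exact hC
  exact_mod_cast hR

/-- If a finite real measure `f dμ` on ℝ has all finite moments and its Cauchy
integral `Kμ(iy)` is `o(y^{-n})` as `y → +∞` for every `n > 0`, then the measure annihilates
all polynomials. -/
theorem annihilates_of_cauchy_transform_superpolynomial_decay
    (μ : Measure ℝ) [IsFiniteMeasure μ] (f : ℝ → ℝ)
    (hf : AEStronglyMeasurable f μ)
    (hmom : ∀ n : ℕ, Integrable (fun t => |t| ^ n * |f t|) μ)
    (hdecay : ∀ n : ℕ, 0 < n →
      (fun y : ℝ => (1 / (Real.pi : ℂ)) * ∫ t, ((t : ℂ) - Complex.I * y)⁻¹ * (f t : ℂ) ∂μ)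
        =o[atTop] fun y : ℝ => y ^ (-(n : ℝ))) :
    ∀ n : ℕ, ∫ t, t ^ n * f t ∂μ = 0 :=
  annihilates_of_cauchy_transform_superpolynomial_decay_general μ f hf hmom hdecay
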